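/- arXiv:2603.05736 — 2 statements merged into one kernel-verified Lean document; each statement's English description precedes it below -/
import Mathlib

section
/- Let n ≥ 9 be an integer with n ≡ 1 (mod 12) or n ≡ 9 (mod 12), and let s = n − 6. Then HOP(2^⟨s⟩, 4, 4, 4) has a solution, i.e., HOP(2^⟨s⟩, 2m_1, 2m_2, 2m_3) has a solution with (m_1, m_2, m_3) = (2, 2, 2). (In the paper this is stated as: 4K_n^• admits an HOP (C_2, C_2, C_2)-decomposition, which by the paper's Theorem 3.2 is equivalent to the stated HOP solution.) -/
/-- The vertex set of the complete graph `K_{2n}`: the `n` couples are indexed by `Fin n`,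
and the two members of a couple by `Fin 2`. -/
abbrev HOPVertex (n : ℕ) : Type := Fin n × Fin 2

/-- The spouse of a participant: the other member of the same couple. -/
def HOPspouse {n : ℕ} (v : HOPVertex n) : HOPVertex n := (v.1, v.2 + 1)

/-- An edge of `K_{2n}` is an `I`-edge (an edge of the distinguished perfect matching `I`)
if it joins a participant to their spouse. -/
def IsIEdge {n : ℕ} (e : Sym2 (HOPVertex n)) : Prop :=
  ∃ v, e = s(v, HOPspouse v)

/-- An `I`-alternating `(K_2^⟨s⟩, C_{2m_1}, …, C_{2m_t})`-factor of `K_{2n}`: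
a spanning subgraph of `K_{2n}` which is a vertex-disjoint union of `s` edges of `I`
(one for each `a : Fin s`, namely the edge joining `pair a` to its spouse) together with
`t` cycles, the `i`-th of which has length `2 * m i` (given by the cyclic vertex sequence
`cyc i : ZMod (2 * m i) → HOPVertex n`), such that along each cycle the edges alternate
between `I`-edges (at even positions) and non-`I`-edges (at odd positions).
The field `spanning` says that the listed vertices are pairwise distinct and exhaust the
whole vertex set; in particular each `cyc i` is injective, so it really traces a cycle. -/
structure HOPFactor (n s t : ℕ) (m : Fin t → ℕ) : Type where
  pair : Fin s → HOPVertex n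
  cyc : (i : Fin t) → ZMod (2 * m i) → HOPVertex n
  alt_even : ∀ (i : Fin t) (j : ZMod (2 * m i)),
      j.val % 2 = 0 → cyc i (j + 1) = HOPspouse (cyc i j)
  alt_odd : ∀ (i : Fin t) (j : ZMod (2 * m i)),
      j.val % 2 = 1 → ¬ IsIEdge s(cyc i j, cyc i (j + 1))
  spanning : Function.Bijective
      (Sum.elim
        (fun a : Fin s × Fin 2 => if a.2 = 0 then pair a.1 else HOPspouse (pair a.1))
        (fun x : (i : Fin t) × ZMod (2 * m i) => cyc x.1 x.2))

/-- The edge set of an `I`-alternating `(K_2^⟨s⟩, C_{2m_1}, …, C_{2m_t})`-factor. -/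
def HOPFactor.edges {n s t : ℕ} {m : Fin t → ℕ} (F : HOPFactor n s t m) :
    Set (Sym2 (HOPVertex n)) :=
  {e | (∃ a : Fin s, e = s(F.pair a, HOPspouse (F.pair a))) ∨
    ∃ (i : Fin t) (j : ZMod (2 * m i)), e = s(F.cyc i j, F.cyc i (j + 1))}

/-- A solution to the generalized Honeymoon Oberwolfach Problem
`HOP(2^⟨s⟩, 2 m_1, …, 2 m_t)`: a family of `γ` `I`-alternating
`(K_2^⟨s⟩, C_{2m_1}, …, C_{2m_t})`-factors of `K_{2n}`, where `γ` is the natural number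
with `γ * (m_1 + ⋯ + m_t) = 2n(n-1)`, such that every edge of `K_{2n}` that is not an
`I`-edge lies in exactly one factor of the family. -/
def HOPSolution (n s t : ℕ) (m : Fin t → ℕ) : Prop :=
  ∃ γ : ℕ, γ * (∑ i, m i) = 2 * n * (n - 1) ∧
    ∃ F : Fin γ → HOPFactor n s t m,
      ∀ e : Sym2 (HOPVertex n), ¬ e.IsDiag → ¬ IsIEdge e →
        ∃! k : Fin γ, e ∈ (F k).edges


set_option linter.unusedSectionVars false

section Prelim
variable {n : ℕ} [NeZero n]

/-- `ZMod n → Fin n` -/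
def zf (z : ZMod n) : Fin n := ⟨z.val, ZMod.val_lt z⟩

lemma zf_injective : Function.Injective (zf (n := n)) := fun _ _ h =>
  ZMod.val_injective n (congrArg Fin.val h)

lemma zf_natCast (a : Fin n) : zf ((a.val : ℕ) : ZMod n) = a := by
  ext; simp [zf, ZMod.val_cast_of_lt a.isLt]

lemma natCast_add_self (a : ℕ) : ((a + n : ℕ) : ZMod n) = (a : ZMod n) := by
  push_cast [ZMod.natCast_self]; ring

lemma natCast_inj_of_lt {a b : ℕ} (ha : a < n) (hb : b < n)
    (h : (a : ZMod n) = (b : ZMod n)) : a = b := by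
  have := congrArg ZMod.val h
  rwa [ZMod.val_cast_of_lt ha, ZMod.val_cast_of_lt hb] at this

lemma not_isIEdge {a b : Fin n} (hab : a ≠ b) (x y : Fin 2) :
    ¬ IsIEdge (n := n) s((a,x),(b,y)) := by
  rintro ⟨w, hw⟩
  rcases Sym2.eq_iff.mp hw with ⟨h1, h2⟩ | ⟨h1, h2⟩ <;>
    exact hab ((congrArg Prod.fst h1).trans (congrArg Prod.fst h2).symm)

lemma fin2_succ_ne : ∀ x : Fin 2, x ≠ x + 1 := by decide
lemma fin2_eq_add_one {x y : Fin 2} (h : x ≠ y) : y = x + 1 := by revert h; revert x y; decide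

end Prelim

section ZMod4
variable {N : ℕ}

lemma zmod4_val_lt (hN : N = 4) (j : ZMod N) : j.val < 4 := by
  subst hN; exact ZMod.val_lt j

lemma zmod4_val_add_one (hN : N = 4) (j : ZMod N) : (j + 1).val = (j.val + 1) % 4 := by
  subst hN; revert j; decide

lemma zmod4_val_inj (hN : N = 4) (j j' : ZMod N) (h : j.val = j'.val) : j = j' := by
  subst hN; revert j j' ; decide

lemma zmod4_val_one (hN : N = 4) : (1 : ZMod N).val = 1 := by subst hN; decide
lemma zmod4_val_two (hN : N = 4) : (1 + 1 : ZMod N).val = 2 := by subst hN; decide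
lemma zmod4_val_three (hN : N = 4) : (1 + 1 + 1 : ZMod N).val = 3 := by subst hN; decide
lemma zmod4_val_four (hN : N = 4) : (1 + 1 + 1 + 1 : ZMod N).val = 0 := by subst hN; decide

end ZMod4

lemma hm4 : ∀ i : Fin 3, 2 * ![2,2,2] i = 4 := by decide

/-- An arc design: `Fintype.card ι` meals, each with 3 arcs whose 6 endpoints are
distinct; every ordered pair `(u,v)`, `u ≠ v`, occurs as an arc exactly once. -/
structure HOPDesign (n : ℕ) where
  ι : Type
  [fintype_ι : Fintype ι]
  arcs : ι → Fin 3 → ZMod n × ZMod n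
  disj : ∀ k, Function.Injective (fun p : Fin 3 × Fin 2 =>
      if p.2 = 0 then (arcs k p.1).1 else (arcs k p.1).2)
  cover : ∀ u v : ZMod n, u ≠ v → ∃! ki : ι × Fin 3, arcs ki.1 ki.2 = (u, v)

attribute [instance] HOPDesign.fintype_ι

namespace HOPDesign
variable {n : ℕ} [NeZero n] (D : HOPDesign n)

def W (k : D.ι) : Fin 3 × Fin 2 → ZMod n := fun p =>
  if p.2 = 0 then (D.arcs k p.1).1 else (D.arcs k p.1).2

lemma W_inj (k : D.ι) : Function.Injective (D.W k) := D.disj k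

lemma arc_ne (k : D.ι) (i : Fin 3) : (D.arcs k i).1 ≠ (D.arcs k i).2 := by
  intro h
  have : ((i, 0) : Fin 3 × Fin 2) = (i, 1) := D.W_inj k (by simpa [W] using h)
  simpa using this

def chi2 (u v : ZMod n) : Fin 2 := if u.val < v.val then 0 else 1

def chi (k : D.ι) (i : Fin 3) : Fin 2 := chi2 (D.arcs k i).1 (D.arcs k i).2

def Cy (k : D.ι) (i : Fin 3) (t : ℕ) : HOPVertex n :=
  (zf (D.W k (i, if t ≤ 1 then 0 else 1)),
   if t = 0 then 0 else if t = 1 then 1 else if t = 2 then D.chi k i else D.chi k i + 1)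

def cyc (k : D.ι) : (i : Fin 3) → ZMod (2 * ![2,2,2] i) → HOPVertex n :=
  fun i j => D.Cy k i j.val

def used (k : D.ι) : Finset (Fin n) := Finset.image (fun p => zf (D.W k p)) Finset.univ

def free (k : D.ι) : Finset (Fin n) := Finset.univ \ D.used k

lemma card_free (k : D.ι) : (D.free k).card = n - 6 := by
  rw [free, Finset.card_sdiff_of_subset (Finset.subset_univ _), used,
    Finset.card_image_of_injective _ (fun a b h => D.W_inj k (zf_injective h))]
  simp

noncomputable def pairE (k : D.ι) : {x // x ∈ D.free k} ≃ Fin (n - 6) :=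
  Finset.equivFinOfCardEq (D.card_free k)

noncomputable def pairF (k : D.ι) : Fin (n - 6) → HOPVertex n :=
  fun a => (((D.pairE k).symm a : Fin n), 0)

lemma pairF_ne_W (k : D.ι) (a : Fin (n-6)) (p : Fin 3 × Fin 2) :
    (((D.pairE k).symm a : Fin n)) ≠ zf (D.W k p) := by
  intro h
  have hm := ((D.pairE k).symm a).2
  have hm2 := (Finset.mem_sdiff.mp hm).2
  exact hm2 (Finset.mem_image.mpr ⟨p, Finset.mem_univ _, h.symm⟩)

end HOPDesign

namespace HOPDesign
variable {n : ℕ} [NeZero n] (D : HOPDesign n)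

lemma Cy0 (k : D.ι) (i : Fin 3) : D.Cy k i 0 = (zf (D.arcs k i).1, 0) := rfl
lemma Cy1 (k : D.ι) (i : Fin 3) : D.Cy k i 1 = (zf (D.arcs k i).1, 1) := rfl
lemma Cy2 (k : D.ι) (i : Fin 3) : D.Cy k i 2 = (zf (D.arcs k i).2, D.chi k i) := rfl
lemma Cy3 (k : D.ι) (i : Fin 3) : D.Cy k i 3 = (zf (D.arcs k i).2, D.chi k i + 1) := rfl

lemma W_eq (k : D.ι) {i i' : Fin 3} {e e' : Fin 2}
    (h : zf (D.W k (i, e)) = zf (D.W k (i', e'))) : i = i' ∧ e = e' := by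
  have h2 := D.W_inj k (zf_injective h)
  exact ⟨congrArg Prod.fst h2, congrArg Prod.snd h2⟩

lemma Cy_eq (k : D.ι) {i i' : Fin 3} {t t' : ℕ} (ht : t < 4) (ht' : t' < 4)
    (h : D.Cy k i t = D.Cy k i' t') : i = i' ∧ t = t' := by
  have hf := congrArg Prod.fst h
  have hs := congrArg Prod.snd h
  simp only [Cy] at hf hs
  obtain ⟨hii, hee⟩ := D.W_eq k hf
  subst hii
  refine ⟨rfl, ?_⟩
  interval_cases t <;> interval_cases t' <;>
    simp_all <;>
    first
      | rfl
      | exact absurd hee (by decide)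
      | exact absurd hs (by decide)
      | exact absurd hs (fin2_succ_ne _)
      | exact absurd hs.symm (fin2_succ_ne _)

noncomputable def factor (hn : 9 ≤ n) (k : D.ι) : HOPFactor n (n-6) 3 ![2,2,2] where
  pair := D.pairF k
  cyc := D.cyc k
  alt_even := by
    intro i j hj
    have h4 := hm4 i
    have hlt := zmod4_val_lt h4 j
    have hadd := zmod4_val_add_one h4 j
    show D.Cy k i (j+1).val = HOPspouse (D.Cy k i j.val)
    rw [hadd]
    have : j.val = 0 ∨ j.val = 2 := by omega
    rcases this with h | h <;> rw [h]
    · rw [show (0+1)%4 = 1 from rfl, D.Cy0, D.Cy1]; rfl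
    · rw [show (2+1)%4 = 3 from rfl, D.Cy2, D.Cy3]; rfl
  alt_odd := by
    intro i j hj
    have h4 := hm4 i
    have hlt := zmod4_val_lt h4 j
    have hadd := zmod4_val_add_one h4 j
    have hne : zf (D.arcs k i).1 ≠ zf (D.arcs k i).2 :=
      fun h => D.arc_ne k i (zf_injective h)
    show ¬ IsIEdge s(D.Cy k i j.val, D.Cy k i (j+1).val)
    rw [hadd]
    have : j.val = 1 ∨ j.val = 3 := by omega
    rcases this with h | h <;> rw [h]
    · rw [show (1+1)%4 = 2 from rfl, D.Cy1, D.Cy2]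
      exact not_isIEdge hne 1 (D.chi k i)
    · rw [show (3+1)%4 = 0 from rfl, D.Cy3, D.Cy0]
      exact not_isIEdge hne.symm (D.chi k i + 1) 0
  spanning := by
    haveI inst4 : ∀ i : Fin 3, NeZero (2 * ![2,2,2] i) := fun i => ⟨by rw [hm4 i]; norm_num⟩
    rw [Fintype.bijective_iff_injective_and_card]
    constructor
    · have hv : ∀ (a : Fin (n-6)) (x : Fin 2),
          (if x = 0 then D.pairF k a else HOPspouse (D.pairF k a))
            = ((((D.pairE k).symm a : Fin n)), x) := by
        intro a x; fin_cases x <;> rfl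
      rintro (⟨a, x⟩ | ⟨i, j⟩) (⟨a', x'⟩ | ⟨i', j'⟩) h
      · simp only [Sum.elim_inl] at h
        rw [hv, hv] at h
        obtain ⟨h1, h2⟩ := Prod.mk.injEq .. ▸ h
        have : (D.pairE k).symm a = (D.pairE k).symm a' := Subtype.coe_injective h1
        have := (D.pairE k).symm.injective this
        subst this; subst h2; rfl
      · simp only [Sum.elim_inl, Sum.elim_inr] at h
        rw [hv] at h
        exact absurd (congrArg Prod.fst h) (D.pairF_ne_W k a _)
      · simp only [Sum.elim_inl, Sum.elim_inr] at h
        rw [hv] at h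
        exact absurd (congrArg Prod.fst h).symm (D.pairF_ne_W k a' _)
      · simp only [Sum.elim_inr] at h
        obtain ⟨hii, htt⟩ := D.Cy_eq k (zmod4_val_lt (hm4 i) j) (zmod4_val_lt (hm4 i') j') h
        subst hii
        have : j = j' := zmod4_val_inj (hm4 i) _ _ htt
        subst this; rfl
    · have hsig : Fintype.card ((i : Fin 3) × ZMod (2 * ![2,2,2] i)) = 12 := by
        rw [Fintype.card_sigma]
        have h4 : ∀ i : Fin 3, Fintype.card (ZMod (2 * ![2,2,2] i)) = 4 := by
          intro i; rw [ZMod.card, hm4 i]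
        simp only [Fin.sum_univ_three, h4]
      rw [Fintype.card_sum, Fintype.card_prod, Fintype.card_prod, Fintype.card_fin,
        Fintype.card_fin, Fintype.card_fin, hsig]
      omega

end HOPDesign



lemma fin2_add_one_eq_zero : ∀ x : Fin 2, x + 1 = 0 ↔ x = 1 := by decide
lemma fin2_one_ne_zero : (1 : Fin 2) ≠ 0 := by decide

namespace HOPDesign
variable {n : ℕ} [NeZero n] (D : HOPDesign n)

def arcEdge (u v : ZMod n) (t : Fin 2) : Sym2 (HOPVertex n) :=
  if t = 1 then s((zf u, 1), (zf v, chi2 u v)) else s((zf v, chi2 u v + 1), (zf u, 0))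

lemma arcEdge_one (u v : ZMod n) : arcEdge u v 1 = s((zf u, 1), (zf v, chi2 u v)) := rfl
lemma arcEdge_zero (u v : ZMod n) : arcEdge u v 0 = s((zf v, chi2 u v + 1), (zf u, 0)) := rfl

lemma chi2_eq_zero {u v : ZMod n} : chi2 u v = 0 ↔ u.val < v.val := by
  rw [chi2]; split_ifs with h <;> simp [h, fin2_one_ne_zero]

lemma chi2_eq_one {u v : ZMod n} : chi2 u v = 1 ↔ ¬ u.val < v.val := by
  rw [chi2]; split_ifs with h <;> simp [h]

lemma arcEdge_injective {u v u' v' : ZMod n} (h1 : u ≠ v) (h2 : u' ≠ v') {t t' : Fin 2}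
    (h : arcEdge u v t = arcEdge u' v' t') : u = u' ∧ v = v' ∧ t = t' := by
  have hvv : ∀ w w' : ZMod n, ¬ w.val < w'.val → ¬ w'.val < w.val → w = w' := by
    intro w w' hw hw'
    exact ZMod.val_injective n (by omega)
  fin_cases t <;> fin_cases t' <;>
    simp only [arcEdge_one, arcEdge_zero] at h <;>
    obtain ⟨ha, hb⟩ | ⟨ha, hb⟩ := Sym2.eq_iff.mp h <;>
    rw [Prod.mk.injEq] at ha hb <;>
    obtain ⟨ha1, ha2⟩ := ha <;> obtain ⟨hb1, hb2⟩ := hb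
  -- t = 0, t' = 0, aligned
  · exact ⟨zf_injective hb1, zf_injective ha1, rfl⟩
  -- t = 0, t' = 0, crossed
  · exfalso
    have hv : v = u' := zf_injective ha1
    have hu : u = v' := zf_injective hb1
    have hc1 : chi2 u v = 1 := (fin2_add_one_eq_zero _).mp ha2
    have hc2 : chi2 u' v' = 1 := (fin2_add_one_eq_zero _).mp hb2.symm
    exact h1 (hvv u v (chi2_eq_one.mp hc1) (by
      have := chi2_eq_one.mp hc2; rw [← hv, ← hu] at this; exact this))
  -- t = 0, t' = 1 caseA : (zf v, χ+1) = (zf u',1), (zf u,0) = (zf v',χ')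
  · exfalso
    have hv : v = u' := zf_injective ha1
    have hu : u = v' := zf_injective hb1
    have hc2 : chi2 u' v' = 0 := hb2.symm
    have hc1 : chi2 u v = 0 := by
      have := (fin2_add_one_eq_zero (chi2 u v)).not.mp (by rw [ha2]; decide)
      rcases (by decide : ∀ z : Fin 2, z = 0 ∨ z = 1) (chi2 u v) with hz | hz
      · exact hz
      · exact absurd ((fin2_add_one_eq_zero _).mpr hz) (by rw [ha2]; decide)
    have l1 := chi2_eq_zero.mp hc1
    have l2 := chi2_eq_zero.mp hc2
    rw [← hv, ← hu] at l2; omega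
  -- t = 0, t' = 1 caseB : (zf v, χ+1) = (zf v', χ'), (zf u,0) = (zf u',1)
  · exact absurd hb2 (by decide)
  -- t = 1, t' = 0 caseA : (zf u,1) = (zf v', χ'+1), (zf v, χ) = (zf u',0)
  · exfalso
    have hu : u = v' := zf_injective ha1
    have hv : v = u' := zf_injective hb1
    have hc1 : chi2 u v = 0 := hb2
    have hc2 : chi2 u' v' = 0 := by
      rcases (by decide : ∀ z : Fin 2, z = 0 ∨ z = 1) (chi2 u' v') with hz | hz
      · exact hz
      · rw [hz] at ha2; exact absurd ha2 (by decide)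
    have l1 := chi2_eq_zero.mp hc1
    have l2 := chi2_eq_zero.mp hc2
    rw [← hv, ← hu] at l2; omega
  -- t = 1, t' = 0 caseB : (zf u,1) = (zf u',0)
  · exact absurd ha2 (by decide)
  -- t = 1, t' = 1 aligned
  · exact ⟨zf_injective ha1, zf_injective hb1, rfl⟩
  -- t = 1, t' = 1 crossed : (zf u,1) = (zf v',χ'), (zf v,χ) = (zf u',1)
  · exfalso
    have hu : u = v' := zf_injective ha1
    have hv : v = u' := zf_injective hb1
    have hc1 : chi2 u v = 1 := hb2
    have hc2 : chi2 u' v' = 1 := ha2.symm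
    have l1 := chi2_eq_one.mp hc1
    have l2 := chi2_eq_one.mp hc2
    rw [← hv, ← hu] at l2
    exact h1 (hvv u v l1 l2)

lemma mem_edges_iff (hn : 9 ≤ n) (k : D.ι) (e : Sym2 (HOPVertex n)) (hI : ¬ IsIEdge e) :
    e ∈ (D.factor hn k).edges ↔ ∃ (i : Fin 3) (t : Fin 2),
      e = arcEdge (D.arcs k i).1 (D.arcs k i).2 t := by
  constructor
  · rintro (⟨a, he⟩ | ⟨i, j, he⟩)
    · exact absurd ⟨_, he⟩ hI
    · have h4 := hm4 i
      have hlt := zmod4_val_lt h4 j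
      have hadd := zmod4_val_add_one h4 j
      have hc : ∀ (jj : ZMod (2 * ![2,2,2] i)), (D.factor hn k).cyc i jj = D.Cy k i jj.val :=
        fun _ => rfl
      rw [hc, hc, hadd] at he
      have : j.val = 0 ∨ j.val = 1 ∨ j.val = 2 ∨ j.val = 3 := by omega
      rcases this with h | h | h | h <;> rw [h] at he
      · exact absurd ⟨(zf (D.arcs k i).1, 0), by rw [he]; rfl⟩ hI
      · exact ⟨i, 1, by rw [he]; rfl⟩
      · exact absurd ⟨(zf (D.arcs k i).2, D.chi k i), by rw [he]; rfl⟩ hI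
      · exact ⟨i, 0, by rw [he]; rfl⟩
  · rintro ⟨i, t, he⟩
    right
    have h4 := hm4 i
    fin_cases t
    · refine ⟨i, 1+1+1, ?_⟩
      show e = s(D.Cy k i (1+1+1 : ZMod (2 * ![2,2,2] i)).val,
        D.Cy k i ((1+1+1 : ZMod (2 * ![2,2,2] i))+1).val)
      rw [show ((1+1+1 : ZMod (2 * ![2,2,2] i))+1) = 1+1+1+1 from rfl,
        zmod4_val_four h4, zmod4_val_three h4, he]; rfl
    · refine ⟨i, 1, ?_⟩
      show e = s(D.Cy k i (1 : ZMod (2 * ![2,2,2] i)).val,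
        D.Cy k i ((1 : ZMod (2 * ![2,2,2] i))+1).val)
      rw [show ((1 : ZMod (2 * ![2,2,2] i))+1) = 1+1 from rfl,
        zmod4_val_two h4, zmod4_val_one h4, he]; rfl

end HOPDesign



namespace HOPDesign
variable {n : ℕ} [NeZero n] (D : HOPDesign n)

lemma cover_case (hn : 9 ≤ n) (cu cv : ZMod n) (hcucv : cu ≠ cv)
    (e : Sym2 (HOPVertex n)) (hI : ¬ IsIEdge e) (ct : Fin 2)
    (hcan : e = arcEdge cu cv ct) : ∃! k : D.ι, e ∈ (D.factor hn k).edges := by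
  obtain ⟨⟨k, i⟩, hki, huniq⟩ := D.cover cu cv hcucv
  refine ⟨k, ?_, ?_⟩
  · show e ∈ (D.factor hn k).edges
    rw [D.mem_edges_iff hn k _ hI]
    refine ⟨i, ct, ?_⟩
    rw [hki]
    exact hcan
  · intro k' hk'
    obtain ⟨i', t', he'⟩ := (D.mem_edges_iff hn k' _ hI).mp hk'
    obtain ⟨h1, h2, h3⟩ := arcEdge_injective hcucv (D.arc_ne k' i') (hcan.symm.trans he')
    exact congrArg Prod.fst (huniq (k', i') (Prod.ext h1.symm h2.symm))

lemma sorted_case (hn : 9 ≤ n) (a b : Fin n) (x y : Fin 2) (hab : a.val < b.val) :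
    ∃! k : D.ι, s(((a,x) : HOPVertex n), ((b,y) : HOPVertex n)) ∈ (D.factor hn k).edges := by
  have habne : a ≠ b := fun h => by rw [h] at hab; omega
  have hI : ¬ IsIEdge s(((a,x) : HOPVertex n),(b,y)) := not_isIEdge habne x y
  set za : ZMod n := ((a.val : ℕ) : ZMod n) with hza_def
  set zb : ZMod n := ((b.val : ℕ) : ZMod n) with hzb_def
  have hza : zf za = a := zf_natCast a
  have hzb : zf zb = b := zf_natCast b
  have hvza : za.val = a.val := ZMod.val_cast_of_lt a.isLt
  have hvzb : zb.val = b.val := ZMod.val_cast_of_lt b.isLt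
  have hzab : za ≠ zb := fun h => by rw [h, hvzb] at hvza; omega
  have hcab : chi2 za zb = 0 := chi2_eq_zero.mpr (by omega)
  have hcba : chi2 zb za = 1 := chi2_eq_one.mpr (by omega)
  rcases (by decide : ∀ z : Fin 2, z = 0 ∨ z = 1) x with rfl | rfl <;>
    rcases (by decide : ∀ z : Fin 2, z = 0 ∨ z = 1) y with rfl | rfl
  · exact D.cover_case hn zb za hzab.symm _ hI 0
      (by rw [arcEdge_zero, hcba, hza, hzb]; rfl)
  · exact D.cover_case hn za zb hzab _ hI 0
      (by rw [arcEdge_zero, hcab, hza, hzb]; exact Sym2.eq_swap)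
  · exact D.cover_case hn za zb hzab _ hI 1
      (by rw [arcEdge_one, hcab, hza, hzb])
  · exact D.cover_case hn zb za hzab.symm _ hI 1
      (by rw [arcEdge_one, hcba, hza, hzb]; exact Sym2.eq_swap)

lemma exists_unique_mem (hn : 9 ≤ n) (e : Sym2 (HOPVertex n))
    (hd : ¬ e.IsDiag) (hI : ¬ IsIEdge e) :
    ∃! k : D.ι, e ∈ (D.factor hn k).edges := by
  revert hd hI
  induction e using Sym2.inductionOn with
  | hf p q =>
    obtain ⟨a, x⟩ := p
    obtain ⟨b, y⟩ := q
    intro hd hI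
    have hab : a ≠ b := by
      rintro rfl
      have hxy : x ≠ y := fun h => hd (by rw [h]; exact Sym2.mk_isDiag_iff.mpr rfl)
      exact hI ⟨(a,x), by rw [fin2_eq_add_one hxy]; rfl⟩
    rcases Nat.lt_or_ge a.val b.val with hlt | hge
    · exact D.sorted_case hn a b x y hlt
    · have hblt : b.val < a.val :=
        lt_of_le_of_ne hge (fun h => hab (Fin.val_injective h.symm))
      rw [Sym2.eq_swap]
      exact D.sorted_case hn b a y x hblt

lemma card_arcs : Fintype.card D.ι * 3 = n * n - n := by
  classical
  have hbij : Function.Bijective (fun ki : D.ι × Fin 3 =>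
      (⟨D.arcs ki.1 ki.2, D.arc_ne ki.1 ki.2⟩ : {p : ZMod n × ZMod n // p.1 ≠ p.2})) := by
    rw [Function.bijective_iff_existsUnique]
    rintro ⟨⟨u, v⟩, huv⟩
    obtain ⟨ki, hki, huniq⟩ := D.cover u v huv
    exact ⟨ki, Subtype.ext hki, fun ki' h => huniq ki' (Subtype.ext_iff.mp h)⟩
  have hcard := Fintype.card_of_bijective hbij
  rw [Fintype.card_prod, Fintype.card_fin] at hcard
  rw [hcard]
  have h1 : Fintype.card {p : ZMod n × ZMod n // p.1 = p.2} = n := by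
    have e : {p : ZMod n × ZMod n // p.1 = p.2} ≃ ZMod n :=
      { toFun := fun p => p.1.1
        invFun := fun z => ⟨(z, z), rfl⟩
        left_inv := fun ⟨⟨u, v⟩, h⟩ => Subtype.ext (Prod.ext rfl h)
        right_inv := fun z => rfl }
    rw [Fintype.card_congr e, ZMod.card]
  have h2 := Fintype.card_subtype_compl (fun p : ZMod n × ZMod n => p.1 = p.2)
  rw [h1, Fintype.card_prod, ZMod.card] at h2
  exact h2

theorem toSolution (E : HOPDesign n) (hn : 9 ≤ n) : HOPSolution n (n-6) 3 ![2,2,2] := by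
  refine ⟨Fintype.card E.ι, ?_, ?_⟩
  · have h := E.card_arcs
    have hsum : (∑ i, (![2,2,2] : Fin 3 → ℕ) i) = 6 := by decide
    rw [hsum]
    have h2 : n * n - n = n * (n - 1) := by
      cases n with
      | zero => rfl
      | succ m =>
        have : (m + 1) * (m + 1) = (m + 1) * m + (m + 1) := by ring
        rw [this, Nat.succ_sub_one, Nat.add_sub_cancel]
    rw [h2] at h
    have h3 : 2 * n * (n - 1) = 2 * (n * (n - 1)) := by ring
    rw [h3]
    omega
  · refine ⟨fun κ => E.factor hn ((Fintype.equivFin E.ι).symm κ), ?_⟩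
    intro e hd hIe
    obtain ⟨k, hk, huniq⟩ := E.exists_unique_mem hn e hd hIe
    refine ⟨Fintype.equivFin E.ι k, ?_, ?_⟩
    · show e ∈ (E.factor hn ((Fintype.equivFin E.ι).symm ((Fintype.equivFin E.ι) k))).edges
      rw [Equiv.symm_apply_apply]; exact hk
    · intro κ' h'
      have h2 := congrArg (Fintype.equivFin E.ι) (huniq _ h')
      rwa [Equiv.apply_symm_apply] at h2

end HOPDesign



section Designs

lemma decomp_unique {M q q' i i' : ℕ} (hq : q < M) (hq' : q' < M) (hi : i < 3) (hi' : i' < 3)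
    (h : q + 1 + i * M = q' + 1 + i' * M) : q = q' ∧ i = i' := by
  interval_cases i <;> interval_cases i' <;> omega

/-- offsets for the design when `n = 3M+1`. -/
def off1 (M q : ℕ) : Fin 3 × Fin 2 → ℕ := fun p =>
  if p.1 = 0 then (if p.2 = 0 then 0 else q+1)
  else if p.1 = 1 then (if p.2 = 0 then 2*M+2 else q+2)
  else (if p.2 = 0 then M+3 else q+3)

lemma off1_lt {M q : ℕ} (hq : q < M) (hM : 4 ≤ M) (p : Fin 3 × Fin 2) :
    off1 M q p < 3*M+1 := by
  obtain ⟨i, e⟩ := p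
  fin_cases i <;> fin_cases e <;> simp [off1] <;> omega

lemma off1_inj {M q : ℕ} (hq : q < M) (hM : 4 ≤ M) {p p' : Fin 3 × Fin 2}
    (h : off1 M q p = off1 M q p') : p = p' := by
  obtain ⟨i, e⟩ := p; obtain ⟨i', e'⟩ := p'
  fin_cases i <;> fin_cases i' <;> fin_cases e <;> fin_cases e' <;> simp_all [off1] <;> omega

lemma off1_diff {M : ℕ} (hM : 4 ≤ M) (q : ℕ) (hq : q < M) (i : Fin 3) :
    ((off1 M q (i, 1) : ℕ) : ZMod (3*M+1))
      = ((off1 M q (i, 0) : ℕ) : ZMod (3*M+1)) + ((q + 1 + i.val * M : ℕ) : ZMod (3*M+1)) := by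
  fin_cases i
  · simp [off1]
  · show ((q+2 : ℕ) : ZMod (3*M+1)) = ((2*M+2 : ℕ) : ZMod (3*M+1)) + ((q+1+1*M : ℕ) : ZMod (3*M+1))
    rw [← Nat.cast_add, show (2*M+2) + (q+1+1*M) = (q+2) + (3*M+1) by ring, natCast_add_self]
  · show ((q+3 : ℕ) : ZMod (3*M+1)) = ((M+3 : ℕ) : ZMod (3*M+1)) + ((q+1+2*M : ℕ) : ZMod (3*M+1))
    rw [← Nat.cast_add, show (M+3) + (q+1+2*M) = (q+3) + (3*M+1) by ring, natCast_add_self]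

def design1 (M : ℕ) (hM : 4 ≤ M) : HOPDesign (3*M+1) where
  ι := ZMod (3*M+1) × Fin M
  arcs := fun k i => (k.1 + ((off1 M k.2.val (i,0) : ℕ) : ZMod (3*M+1)),
                      k.1 + ((off1 M k.2.val (i,1) : ℕ) : ZMod (3*M+1)))
  disj := by
    intro k p p' h
    have harc : ∀ (p : Fin 3 × Fin 2),
        (if p.2 = 0 then (k.1 + ((off1 M k.2.val (p.1,0) : ℕ) : ZMod (3*M+1)),
              k.1 + ((off1 M k.2.val (p.1,1) : ℕ) : ZMod (3*M+1))).1
          else (k.1 + ((off1 M k.2.val (p.1,0) : ℕ) : ZMod (3*M+1)),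
              k.1 + ((off1 M k.2.val (p.1,1) : ℕ) : ZMod (3*M+1))).2)
          = k.1 + ((off1 M k.2.val p : ℕ) : ZMod (3*M+1)) := by
      rintro ⟨i, e⟩
      rcases (by decide : ∀ z : Fin 2, z = 0 ∨ z = 1) e with rfl | rfl <;> rfl
    simp only at h
    rw [harc, harc] at h
    have h2 := add_left_cancel h
    exact off1_inj k.2.2 hM (natCast_inj_of_lt (off1_lt k.2.2 hM p) (off1_lt k.2.2 hM p') h2)
  cover := by
    intro u v huv
    have hd : v - u ≠ 0 := sub_ne_zero.mpr huv.symm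
    have hdv1 : 1 ≤ (v-u).val := Nat.pos_of_ne_zero (fun h => hd ((ZMod.val_eq_zero _).mp h))
    have hdvlt : (v-u).val < 3*M+1 := ZMod.val_lt _
    set dv := (v-u).val with hdvdef
    have hM0 : 0 < M := by omega
    have hq : (dv - 1) % M < M := Nat.mod_lt _ hM0
    have hiv : (dv - 1) / M < 3 := (Nat.div_lt_iff_lt_mul hM0).mpr (by omega)
    have hsum : (dv - 1) % M + 1 + ((dv - 1) / M) * M = dv := by
      have h1 := Nat.mod_add_div (dv-1) M
      have h2 : ((dv-1)/M) * M = M * ((dv-1)/M) := Nat.mul_comm _ _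
      omega
    have hcastdv : ((dv : ℕ) : ZMod (3*M+1)) = v - u := ZMod.natCast_rightInverse _
    refine ⟨((u - ((off1 M ((dv-1) % M) (⟨(dv-1)/M, hiv⟩, 0) : ℕ) : ZMod (3*M+1)), ⟨(dv-1)%M, hq⟩),
      ⟨(dv-1)/M, hiv⟩), ?_, ?_⟩
    · show (_ + _, _ + _) = (u, v)
      refine Prod.ext ?_ ?_
      · show u - _ + _ = u
        exact sub_add_cancel u _
      · show u - _ + ((off1 M ((dv-1) % M) (⟨(dv-1)/M, hiv⟩, 1) : ℕ) : ZMod (3*M+1)) = v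
        rw [off1_diff hM _ hq ⟨(dv-1)/M, hiv⟩]
        show u - _ + (_ + ((((dv-1) % M + 1 + (dv-1)/M * M : ℕ) : ZMod (3*M+1)))) = v
        rw [hsum, hcastdv]
        ring
    · rintro ⟨⟨r', q'⟩, i'⟩ harc
      have h1 : r' + ((off1 M q'.val (i',0) : ℕ) : ZMod (3*M+1)) = u := congrArg Prod.fst harc
      have h2 : r' + ((off1 M q'.val (i',1) : ℕ) : ZMod (3*M+1)) = v := congrArg Prod.snd harc
      rw [off1_diff hM _ q'.2 i'] at h2
      have hduv : ((q'.val + 1 + i'.val * M : ℕ) : ZMod (3*M+1)) = v - u := by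
        rw [← h1, ← h2]; ring
      have hnat : q'.val + 1 + i'.val * M = dv :=
        natCast_inj_of_lt (by have := q'.2; have := i'.2; nlinarith)
          hdvlt (hduv.trans hcastdv.symm)
      obtain ⟨hqeq, hieq⟩ := decomp_unique q'.2 hq i'.2 hiv (by omega)
      have hi' : i' = ⟨(dv-1)/M, hiv⟩ := Fin.ext hieq
      have hq' : q' = ⟨(dv-1)%M, hq⟩ := Fin.ext hqeq
      subst hi'; subst hq'
      have hr : r' = u - ((off1 M ((dv-1)%M) (⟨(dv-1)/M, hiv⟩,0) : ℕ) : ZMod (3*M+1)) := by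
        rw [← h1]; ring
      rw [hr]


/-- main offsets for the design when `n = 3M+3`. -/
def off2 (M q : ℕ) : Fin 3 × Fin 2 → ℕ := fun p =>
  if p.1.val = 0 then (if p.2.val = 0 then 0 else q+1)
  else if p.1.val = 1 then (if p.2.val = 0 then M+2 else 2*M+q+3)
  else (if p.2.val = 0 then M+4 else q+2)

/-- special offsets for the design when `n = 3M+3` (short arcs of length `-(c+1)`). -/
def offS (M c : ℕ) : Fin 3 × Fin 2 → ℕ := fun p =>
  if p.1.val = 0 then (if p.2.val = 0 then 0 else 3*M+2-c)
  else if p.1.val = 1 then (if p.2.val = 0 then M+1 else M-c)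
  else (if p.2.val = 0 then 2*M+2 else 2*M+1-c)

lemma off2_lt {M q : ℕ} (hq : q < M) (hM : 2 ≤ M) (p : Fin 3 × Fin 2) :
    off2 M q p < 3*M+3 := by
  obtain ⟨i, e⟩ := p
  fin_cases i <;> fin_cases e <;> simp [off2] <;> omega

lemma off2_inj {M q : ℕ} (hq : q < M) (hM : 2 ≤ M) {p p' : Fin 3 × Fin 2}
    (h : off2 M q p = off2 M q p') : p = p' := by
  obtain ⟨i, e⟩ := p; obtain ⟨i', e'⟩ := p'
  fin_cases i <;> fin_cases i' <;> fin_cases e <;> fin_cases e' <;>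
    first
      | rfl
      | (exfalso; simp [off2] at h; omega)
      | (exfalso; simp [off2] at h)

lemma offS_lt {M c : ℕ} (hc : c ≤ 1) (hM : 2 ≤ M) (p : Fin 3 × Fin 2) :
    offS M c p < 3*M+3 := by
  obtain ⟨i, e⟩ := p
  fin_cases i <;> fin_cases e <;> simp [offS] <;> omega

lemma offS_inj {M c : ℕ} (hc : c ≤ 1) (hM : 2 ≤ M) {p p' : Fin 3 × Fin 2}
    (h : offS M c p = offS M c p') : p = p' := by
  obtain ⟨i, e⟩ := p; obtain ⟨i', e'⟩ := p'
  fin_cases i <;> fin_cases i' <;> fin_cases e <;> fin_cases e' <;>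
    first
      | rfl
      | (exfalso; simp [offS] at h; omega)
      | (exfalso; simp [offS] at h)

lemma off2_diff {M : ℕ} (hM : 2 ≤ M) (q : ℕ) (hq : q < M) (i : Fin 3) :
    ((off2 M q (i, 1) : ℕ) : ZMod (3*M+3))
      = ((off2 M q (i, 0) : ℕ) : ZMod (3*M+3)) + ((q + 1 + i.val * M : ℕ) : ZMod (3*M+3)) := by
  fin_cases i
  · simp [off2]
  · show ((2*M+q+3 : ℕ) : ZMod (3*M+3)) = ((M+2 : ℕ) : ZMod (3*M+3)) + ((q+1+1*M : ℕ) : ZMod (3*M+3))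
    rw [← Nat.cast_add, show (M+2) + (q+1+1*M) = 2*M+q+3 by ring]
  · show ((q+2 : ℕ) : ZMod (3*M+3)) = ((M+4 : ℕ) : ZMod (3*M+3)) + ((q+1+2*M : ℕ) : ZMod (3*M+3))
    rw [← Nat.cast_add, show (M+4) + (q+1+2*M) = (q+2) + (3*M+3) by ring, natCast_add_self]

lemma offS_diff {M : ℕ} (hM : 2 ≤ M) (c : ℕ) (hc : c ≤ 1) (i : Fin 3) :
    ((offS M c (i, 1) : ℕ) : ZMod (3*M+3))
      = ((offS M c (i, 0) : ℕ) : ZMod (3*M+3)) + ((3*M+2-c : ℕ) : ZMod (3*M+3)) := by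
  fin_cases i
  · simp [offS]
  · show ((M-c : ℕ) : ZMod (3*M+3)) = ((M+1 : ℕ) : ZMod (3*M+3)) + ((3*M+2-c : ℕ) : ZMod (3*M+3))
    rw [← Nat.cast_add, show (M+1) + (3*M+2-c) = (M-c) + (3*M+3) by omega, natCast_add_self]
  · show ((2*M+1-c : ℕ) : ZMod (3*M+3)) = ((2*M+2 : ℕ) : ZMod (3*M+3)) + ((3*M+2-c : ℕ) : ZMod (3*M+3))
    rw [← Nat.cast_add, show (2*M+2) + (3*M+2-c) = (2*M+1-c) + (3*M+3) by omega, natCast_add_self]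

lemma offS_zero {M : ℕ} (c : ℕ) (i : Fin 3) : offS M c (i, 0) = i.val * (M+1) := by
  fin_cases i <;> simp [offS] <;> ring

/-- base point of a meal -/
def base2 (M : ℕ) (k : (ZMod (3*M+3) × Fin M) ⊕ (Fin (M+1) × Fin 2)) : ZMod (3*M+3) :=
  match k with
  | Sum.inl (r, _) => r
  | Sum.inr (t, _) => ((t.val : ℕ) : ZMod (3*M+3))

/-- offsets of a meal -/
def offD (M : ℕ) (k : (ZMod (3*M+3) × Fin M) ⊕ (Fin (M+1) × Fin 2)) : Fin 3 × Fin 2 → ℕ :=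
  match k with
  | Sum.inl (_, q) => off2 M q.val
  | Sum.inr (_, c) => offS M c.val

/-- arc difference value of a meal -/
def delta2 (M : ℕ) (k : (ZMod (3*M+3) × Fin M) ⊕ (Fin (M+1) × Fin 2)) (i : Fin 3) : ℕ :=
  match k with
  | Sum.inl (_, q) => q.val + 1 + i.val * M
  | Sum.inr (_, c) => 3*M+2-c.val

lemma offD_lt {M : ℕ} (hM : 2 ≤ M) (k) (p : Fin 3 × Fin 2) : offD M k p < 3*M+3 := by
  rcases k with ⟨r, q⟩ | ⟨t, c⟩
  · exact off2_lt q.2 hM p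
  · exact offS_lt (by omega : c.val ≤ 1) hM p

lemma offD_inj {M : ℕ} (hM : 2 ≤ M) (k) {p p' : Fin 3 × Fin 2}
    (h : offD M k p = offD M k p') : p = p' := by
  rcases k with ⟨r, q⟩ | ⟨t, c⟩
  · exact off2_inj q.2 hM h
  · exact offS_inj (by omega : c.val ≤ 1) hM h

lemma offD_diff {M : ℕ} (hM : 2 ≤ M) (k) (i : Fin 3) :
    ((offD M k (i, 1) : ℕ) : ZMod (3*M+3))
      = ((offD M k (i, 0) : ℕ) : ZMod (3*M+3)) + ((delta2 M k i : ℕ) : ZMod (3*M+3)) := by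
  rcases k with ⟨r, q⟩ | ⟨t, c⟩
  · exact off2_diff hM q.val q.2 i
  · exact offS_diff hM c.val (by omega) i

lemma delta2_lt {M : ℕ} (hM : 2 ≤ M) (k) (i : Fin 3) : delta2 M k i < 3*M+3 := by
  rcases k with ⟨r, q⟩ | ⟨t, c⟩ <;> simp only [delta2]
  · have := q.2; have := i.2; nlinarith
  · omega

def design2 (M : ℕ) (hM : 2 ≤ M) : HOPDesign (3*M+3) where
  ι := (ZMod (3*M+3) × Fin M) ⊕ (Fin (M+1) × Fin 2)
  arcs := fun k i => (base2 M k + ((offD M k (i,0) : ℕ) : ZMod (3*M+3)),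
                      base2 M k + ((offD M k (i,1) : ℕ) : ZMod (3*M+3)))
  disj := by
    intro k p p' h
    have harc : ∀ (p : Fin 3 × Fin 2),
        (if p.2 = 0 then (base2 M k + ((offD M k (p.1,0) : ℕ) : ZMod (3*M+3)),
              base2 M k + ((offD M k (p.1,1) : ℕ) : ZMod (3*M+3))).1
          else (base2 M k + ((offD M k (p.1,0) : ℕ) : ZMod (3*M+3)),
              base2 M k + ((offD M k (p.1,1) : ℕ) : ZMod (3*M+3))).2)
          = base2 M k + ((offD M k p : ℕ) : ZMod (3*M+3)) := by
      rintro ⟨i, e⟩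
      rcases (by decide : ∀ z : Fin 2, z = 0 ∨ z = 1) e with rfl | rfl <;> rfl
    simp only at h
    rw [harc, harc] at h
    have h2 := add_left_cancel h
    exact offD_inj hM k (natCast_inj_of_lt (offD_lt hM k p) (offD_lt hM k p') h2)
  cover := by
    intro u v huv
    have hd : v - u ≠ 0 := sub_ne_zero.mpr huv.symm
    have hdv1 : 1 ≤ (v-u).val := Nat.pos_of_ne_zero (fun h => hd ((ZMod.val_eq_zero _).mp h))
    have hdvlt : (v-u).val < 3*M+3 := ZMod.val_lt _
    set dv := (v-u).val with hdvdef
    have hM0 : 0 < M := by omega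
    have hcastdv : ((dv : ℕ) : ZMod (3*M+3)) = v - u := ZMod.natCast_rightInverse _
    -- generic uniqueness: any arc representing (u,v) has its delta equal to dv
    have huniq : ∀ (k) (i : Fin 3),
        ((base2 M k + ((offD M k (i,0) : ℕ) : ZMod (3*M+3)),
          base2 M k + ((offD M k (i,1) : ℕ) : ZMod (3*M+3))) = (u,v)) →
        delta2 M k i = dv ∧ base2 M k + ((offD M k (i,0) : ℕ) : ZMod (3*M+3)) = u := by
      intro k i harc
      have h1 : base2 M k + ((offD M k (i,0) : ℕ) : ZMod (3*M+3)) = u := congrArg Prod.fst harc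
      have h2 : base2 M k + ((offD M k (i,1) : ℕ) : ZMod (3*M+3)) = v := congrArg Prod.snd harc
      rw [offD_diff hM k i] at h2
      have hduv : ((delta2 M k i : ℕ) : ZMod (3*M+3)) = v - u := by rw [← h1, ← h2]; ring
      exact ⟨natCast_inj_of_lt (delta2_lt hM k i) hdvlt (hduv.trans hcastdv.symm), h1⟩
    by_cases hmain : dv ≤ 3*M
    · -- main meals
      have hq : (dv - 1) % M < M := Nat.mod_lt _ hM0
      have hiv : (dv - 1) / M < 3 := (Nat.div_lt_iff_lt_mul hM0).mpr (by omega)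
      have hsum : (dv - 1) % M + 1 + ((dv - 1) / M) * M = dv := by
        have h1 := Nat.mod_add_div (dv-1) M
        have h2 : ((dv-1)/M) * M = M * ((dv-1)/M) := Nat.mul_comm _ _
        omega
      refine ⟨(Sum.inl (u - ((off2 M ((dv-1) % M) (⟨(dv-1)/M, hiv⟩,0) : ℕ) : ZMod (3*M+3)),
        ⟨(dv-1)%M, hq⟩), ⟨(dv-1)/M, hiv⟩), ?_, ?_⟩
      · show (_ + _, _ + _) = (u, v)
        refine Prod.ext (sub_add_cancel u _) ?_
        show u - _ + ((off2 M ((dv-1) % M) (⟨(dv-1)/M, hiv⟩, 1) : ℕ) : ZMod (3*M+3)) = v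
        rw [off2_diff hM _ hq ⟨(dv-1)/M, hiv⟩]
        show u - _ + (_ + ((((dv-1) % M + 1 + (dv-1)/M * M : ℕ) : ZMod (3*M+3)))) = v
        rw [hsum, hcastdv]
        ring
      · rintro ⟨k', i'⟩ harc
        obtain ⟨hdelta, hbase⟩ := huniq k' i' harc
        rcases k' with ⟨r', q'⟩ | ⟨t', c'⟩
        · simp only [delta2] at hdelta
          obtain ⟨hqeq, hieq⟩ := decomp_unique q'.2 hq i'.2 hiv (by omega)
          have hi' : i' = ⟨(dv-1)/M, hiv⟩ := Fin.ext hieq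
          have hq' : q' = ⟨(dv-1)%M, hq⟩ := Fin.ext hqeq
          subst hi'; subst hq'
          have hr : r' = u - ((off2 M ((dv-1)%M) (⟨(dv-1)/M, hiv⟩,0) : ℕ) : ZMod (3*M+3)) := by
            have := hbase
            simp only [base2, offD] at this
            rw [← this]; ring
          rw [hr]
        · exfalso
          simp only [delta2] at hdelta
          have := c'.2
          omega
    · -- special meals
      have hc : 3*M+2-dv ≤ 1 := by omega
      set uv := u.val with huvdef
      have huvlt : uv < 3*M+3 := ZMod.val_lt _
      have hM1 : 0 < M+1 := by omega
      have htv : uv % (M+1) < M+1 := Nat.mod_lt _ hM1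
      have hivS : uv / (M+1) < 3 := (Nat.div_lt_iff_lt_mul hM1).mpr (by omega)
      have hsumS : uv % (M+1) + (uv/(M+1)) * (M+1) = uv := by
        have h1 := Nat.mod_add_div uv (M+1)
        have h2 : (uv/(M+1)) * (M+1) = (M+1) * (uv/(M+1)) := Nat.mul_comm _ _
        omega
      have hcastuv : ((uv : ℕ) : ZMod (3*M+3)) = u := ZMod.natCast_rightInverse _
      have hstart : ∀ (c : Fin 2),
          base2 M (Sum.inr (⟨uv % (M+1), htv⟩, c))
            + ((offD M (Sum.inr (⟨uv % (M+1), htv⟩, c)) (⟨uv/(M+1), hivS⟩, 0) : ℕ) : ZMod (3*M+3)) = u := by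
        intro c
        show ((uv % (M+1) : ℕ) : ZMod (3*M+3)) + ((offS M c.val (⟨uv/(M+1), hivS⟩, 0) : ℕ) : ZMod (3*M+3)) = u
        rw [offS_zero, ← Nat.cast_add]
        show (((uv % (M+1)) + (uv/(M+1)) * (M+1) : ℕ) : ZMod (3*M+3)) = u
        rw [hsumS, hcastuv]
      refine ⟨(Sum.inr (⟨uv % (M+1), htv⟩, ⟨3*M+2-dv, by omega⟩), ⟨uv/(M+1), hivS⟩), ?_, ?_⟩
      · show (_ + _, _ + _) = (u, v)
        refine Prod.ext (hstart _) ?_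
        show base2 M _ + ((offD M (Sum.inr (⟨uv % (M+1), htv⟩, ⟨3*M+2-dv, by omega⟩)) (⟨uv/(M+1), hivS⟩, 1) : ℕ) : ZMod (3*M+3)) = v
        rw [offD_diff hM _ ⟨uv/(M+1), hivS⟩]
        rw [← add_assoc, hstart]
        show u + ((delta2 M (Sum.inr (⟨uv % (M+1), htv⟩, ⟨3*M+2-dv, by omega⟩)) ⟨uv/(M+1), hivS⟩ : ℕ) : ZMod (3*M+3)) = v
        simp only [delta2]
        rw [show 3*M+2-(3*M+2-dv) = dv by omega, hcastdv]
        ring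
      · rintro ⟨k', i'⟩ harc
        obtain ⟨hdelta, hbase⟩ := huniq k' i' harc
        rcases k' with ⟨r', q'⟩ | ⟨t', c'⟩
        · exfalso
          simp only [delta2] at hdelta
          have h1 := q'.2
          have h2 := i'.2
          nlinarith
        · simp only [delta2] at hdelta
          have hbase2 : ((t'.val + i'.val * (M+1) : ℕ) : ZMod (3*M+3)) = u := by
            rw [← hbase]
            show _ = ((t'.val : ℕ) : ZMod (3*M+3)) + ((offS M c'.val (i', 0) : ℕ) : ZMod (3*M+3))
            rw [offS_zero, ← Nat.cast_add]
          have hnat : t'.val + i'.val * (M+1) = uv :=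
            natCast_inj_of_lt (by have := t'.2; have := i'.2; nlinarith) huvlt
              (hbase2.trans hcastuv.symm)
          have hie : t'.val = uv % (M+1) ∧ i'.val = uv / (M+1) :=
            decomp_unique t'.2 htv i'.2 hivS (by omega)
          refine Prod.ext (congrArg Sum.inr (Prod.ext ?_ ?_)) ?_
          · show t' = ⟨uv % (M+1), htv⟩
            exact Fin.ext hie.1
          · show c' = ⟨3*M+2-dv, by omega⟩
            exact Fin.ext (show c'.val = 3*M+2-dv by have := c'.2; omega)
          · show i' = ⟨uv/(M+1), hivS⟩
            exact Fin.ext hie.2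

end Designs




/-- Lemma 6.1(ii): for `n ≥ 9` with `n ≡ 1` or `9 (mod 12)` and `s = n - 6`,
`HOP(2^⟨s⟩, 4, 4, 4)` has a solution. -/
theorem hop_C2_C2_C2 (n s : ℕ) (hn9 : 9 ≤ n)
    (hcong : n % 12 = 1 ∨ n % 12 = 9) (hs : s = n - 6) :
    HOPSolution n s 3 ![2, 2, 2] := by
  subst hs
  rcases hcong with h | h
  · obtain ⟨M, rfl⟩ : ∃ M, n = 3*M+1 := ⟨(n-1)/3, by omega⟩
    exact (design1 M (by omega)).toSolution (by omega)
  · obtain ⟨M, rfl⟩ : ∃ M, n = 3*M+3 := ⟨(n-3)/3, by omega⟩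
    haveI : NeZero (3*M+3) := ⟨by omega⟩
    exact (design2 M (by omega)).toSolution (by omega)
end

section
/- Let k ≥ 0 be an integer, let n = 12k + 9 and s = n − 6. Then HOP(2^⟨s⟩, 4, 8) has a solution, i.e., HOP(2^⟨s⟩, 2m_1, 2m_2) has a solution with (m_1, m_2) = (2, 4). (In the paper this is stated as: 4K_n^• admits an HOP (C_2, C_4)-decomposition, which by the paper's Theorem 3.2 is equivalent to the stated HOP solution.) -/
/-!
Identify the couples with `ZMod n`, `n = 12k + 9`. Seating six couples at the two tables (the
others forming the `K₂`'s) gives a factor whose six non-spouse edges join some `(P, u)` to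
`(P + d, v)` with `1 ≤ d ≤ 6k + 4`. Translation by a multiple of `3` preserves `P mod 3`, `d`, `u`
and `v`, so we take `12k + 8` base seatings together with their translates by `3j`, `j < 4k + 3`.
The base seatings are chosen so that each of the classes `(P mod 3, d, u, v)` occurs among their
seat edges. There are `6 (12k + 8)(4k + 3) = 2n(n - 1)` seat edges in all, exactly as many as
non-spouse edges of `K_{2n}`, so every non-spouse edge lies in exactly one factor.
-/

open Function

lemma not_isIEdge_of_fst_ne {n : ℕ} {v w : HOPVertex n} (h : v.1 ≠ w.1) : ¬ IsIEdge s(v, w) := by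
  rintro ⟨x, hx⟩
  rcases Sym2.eq_iff.mp hx with ⟨rfl, rfl⟩ | ⟨rfl, rfl⟩ <;> exact h rfl

lemma not_isDiag_of_isIEdge {n : ℕ} {e : Sym2 (HOPVertex n)} (he : IsIEdge e) : ¬ e.IsDiag := by
  obtain ⟨v, rfl⟩ := he
  rw [Sym2.mk_isDiag_iff]
  intro h
  have := congrArg Prod.snd h
  simp only [HOPspouse] at this
  omega

lemma Fin.val_finRotate {M : ℕ} (a : Fin M) : (finRotate M a : ℕ) = (a + 1) % M := by
  obtain ⟨M, rfl⟩ : ∃ M', M = M' + 1 := Nat.exists_eq_succ_of_ne_zero a.pos.ne'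
  rw [finRotate_apply, Fin.val_add, Fin.val_one', Nat.add_mod_mod]

namespace ZMod

variable {M : ℕ} [NeZero M]

lemma val_div_two_lt (j : ZMod (2 * M)) : j.val / 2 < M := by
  have : NeZero (2 * M) := ⟨by simp [NeZero.ne M]⟩
  have := j.val_lt
  omega

lemma val_add_one_of_even (j : ZMod (2 * M)) (h : j.val % 2 = 0) : (j + 1).val = j.val + 1 := by
  have : NeZero (2 * M) := ⟨by simp [NeZero.ne M]⟩
  have := j.val_lt
  rw [← natCast_zmod_val j, ← Nat.cast_succ, val_natCast, val_natCast_of_lt this,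
    Nat.mod_eq_of_lt (by omega)]

lemma val_add_one_of_odd (j : ZMod (2 * M)) (h : j.val % 2 = 1) :
    (j + 1).val = 2 * ((j.val / 2 + 1) % M) := by
  have : NeZero (2 * M) := ⟨by simp [NeZero.ne M]⟩
  rw [← natCast_zmod_val j, ← Nat.cast_succ, val_natCast, val_natCast_of_lt j.val_lt,
    ← Nat.mul_mod_mul_left]
  congr 1
  omega

end ZMod

/-- A seating of couples at round tables of sizes `2 m i`: `seat ⟨i, a⟩` is the participant at
place `a` of table `i`, and their spouse sits to their right, so that table `i` is the
`I`-alternating cycle `seat ⟨i, 0⟩, spouse, seat ⟨i, 1⟩, spouse, …`. -/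
structure HOPSeating (n t : ℕ) (m : Fin t → ℕ) where
  seat : (Σ i, Fin (m i)) → HOPVertex n
  couple_injective : Injective fun p => (seat p).1

namespace HOPSeating

variable {n s t : ℕ} {m : Fin t → ℕ}

def next (p : Σ i, Fin (m i)) : Σ i, Fin (m i) := ⟨p.1, finRotate _ p.2⟩

lemma next_ne (hm : ∀ i, 2 ≤ m i) : ∀ p : Σ i, Fin (m i), next p ≠ p := by
  rintro ⟨i, a⟩ h
  have h' := congrArg Fin.val (eq_of_heq (Sigma.mk.inj_iff.mp h).2)
  rw [Fin.val_finRotate] at h'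
  have := hm i
  have := a.isLt
  rcases Nat.lt_or_ge (a + 1) (m i) with hlt | hge
  · rw [Nat.mod_eq_of_lt hlt] at h'
    omega
  · rw [show (a : ℕ) + 1 = m i by omega, Nat.mod_self] at h'
    omega

variable (S : HOPSeating n t m)

def seatEdge (p : Σ i, Fin (m i)) : Sym2 (HOPVertex n) :=
  s(HOPspouse (S.seat p), S.seat (next p))

lemma seatEdge_fst_ne (hm : ∀ i, 2 ≤ m i) (p : Σ i, Fin (m i)) :
    (HOPspouse (S.seat p)).1 ≠ (S.seat (next p)).1 :=
  fun h => next_ne hm p (S.couple_injective h).symm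

lemma seatEdge_not_isDiag (hm : ∀ i, 2 ≤ m i) (p : Σ i, Fin (m i)) :
    ¬ (S.seatEdge p).IsDiag := by
  rw [seatEdge, Sym2.mk_isDiag_iff]
  exact fun h => S.seatEdge_fst_ne hm p (congrArg Prod.fst h)

lemma not_isIEdge_seatEdge (hm : ∀ i, 2 ≤ m i) (p : Σ i, Fin (m i)) :
    ¬ IsIEdge (S.seatEdge p) :=
  not_isIEdge_of_fst_ne (S.seatEdge_fst_ne hm p)

def cycSeat (hm : ∀ i, 2 ≤ m i) (i : Fin t) (j : ZMod (2 * m i)) : Fin (m i) :=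
  have : NeZero (m i) := ⟨by have := hm i; omega⟩
  ⟨j.val / 2, ZMod.val_div_two_lt j⟩

def cyc (hm : ∀ i, 2 ≤ m i) (i : Fin t) (j : ZMod (2 * m i)) : HOPVertex n :=
  if j.val % 2 = 0 then S.seat ⟨i, cycSeat hm i j⟩ else HOPspouse (S.seat ⟨i, cycSeat hm i j⟩)

variable (hm : ∀ i, 2 ≤ m i)

lemma fst_cyc (i : Fin t) (j : ZMod (2 * m i)) :
    (S.cyc hm i j).1 = (S.seat ⟨i, cycSeat hm i j⟩).1 := by
  unfold cyc
  split_ifs <;> rfl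

lemma cyc_add_one_of_even (i : Fin t) (j : ZMod (2 * m i)) (hj : j.val % 2 = 0) :
    S.cyc hm i (j + 1) = HOPspouse (S.cyc hm i j) := by
  have : NeZero (m i) := ⟨by have := hm i; omega⟩
  have hval := ZMod.val_add_one_of_even j hj
  have hseat : cycSeat hm i (j + 1) = cycSeat hm i j := Fin.ext (by simp [cycSeat, hval]; omega)
  simp only [cyc, hseat, hval, hj]
  simp [show ¬ ((j.val + 1) % 2 = 0) by omega]

lemma cyc_edge_of_odd (i : Fin t) (j : ZMod (2 * m i)) (hj : j.val % 2 = 1) :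
    s(S.cyc hm i j, S.cyc hm i (j + 1)) = S.seatEdge ⟨i, cycSeat hm i j⟩ := by
  have : NeZero (m i) := ⟨by have := hm i; omega⟩
  have hval := ZMod.val_add_one_of_odd j hj
  have hseat : cycSeat hm i (j + 1) = finRotate _ (cycSeat hm i j) :=
    Fin.ext (by rw [Fin.val_finRotate]; simp only [cycSeat, hval]; omega)
  simp [cyc, seatEdge, next, hseat, hval, hj]

lemma exists_odd_cycSeat_eq (i : Fin t) (a : Fin (m i)) :
    ∃ j : ZMod (2 * m i), j.val % 2 = 1 ∧ cycSeat hm i j = a := by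
  have : NeZero (m i) := ⟨by have := hm i; omega⟩
  have hval : ((2 * a + 1 : ℕ) : ZMod (2 * m i)).val = 2 * a + 1 :=
    ZMod.val_natCast_of_lt (by omega)
  exact ⟨_, by rw [hval]; omega, Fin.ext (by simp only [cycSeat, hval]; omega)⟩

lemma cyc_injective {i i' : Fin t} {j : ZMod (2 * m i)} {j' : ZMod (2 * m i')}
    (h : S.cyc hm i j = S.cyc hm i' j') : (⟨i, j⟩ : Σ i, ZMod (2 * m i)) = ⟨i', j'⟩ := by
  have hseat := S.couple_injective
    (show (S.seat ⟨i, cycSeat hm i j⟩).1 = (S.seat ⟨i', cycSeat hm i' j'⟩).1 by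
      rw [← fst_cyc, ← fst_cyc, h])
  obtain ⟨rfl, hseat⟩ := Sigma.mk.inj_iff.mp hseat
  have : NeZero (2 * m i) := ⟨by have := hm i; omega⟩
  have hdiv : j.val / 2 = j'.val / 2 := congrArg Fin.val (eq_of_heq hseat)
  have hmod : j.val % 2 = j'.val % 2 := by
    have h2 := congrArg Prod.snd h
    simp only [cyc, eq_of_heq hseat, HOPspouse] at h2
    split_ifs at h2 <;> simp only at h2 <;> omega
  rw [ZMod.val_injective _ (show j.val = j'.val by omega)]

variable (hs : s + ∑ i, m i = n)

open scoped Classical in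
noncomputable def restCouple : Fin s ≃ {c : Fin n // c ∉ Set.range fun p => (S.seat p).1} :=
  (Fintype.equivFinOfCardEq (by
    have hrange := Fintype.card_congr (Equiv.ofInjective _ S.couple_injective)
    simp only [Fintype.card_sigma, Fintype.card_fin] at hrange
    rw [Fintype.card_subtype_compl, Fintype.card_fin, ← hrange]
    omega)).symm

lemma spanning_bijective :
    Bijective (Sum.elim
      (fun a : Fin s × Fin 2 => if a.2 = 0 then ((S.restCouple hs a.1 : Fin n), (0 : Fin 2))
        else HOPspouse ((S.restCouple hs a.1 : Fin n), (0 : Fin 2)))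
      (fun x : (i : Fin t) × ZMod (2 * m i) => S.cyc hm x.1 x.2)) := by
  have : ∀ i, NeZero (2 * m i) := fun i => ⟨by have := hm i; omega⟩
  have hpair (a : Fin s × Fin 2) :
      (if a.2 = 0 then ((S.restCouple hs a.1 : Fin n), (0 : Fin 2))
        else HOPspouse ((S.restCouple hs a.1 : Fin n), 0)) =
        ((S.restCouple hs a.1 : Fin n), a.2) := by
    obtain ⟨a, p⟩ := a
    fin_cases p <;> rfl
  rw [Fintype.bijective_iff_injective_and_card]
  refine ⟨?_, ?_⟩
  · rintro (a | ⟨i, j⟩) (a' | ⟨i', j'⟩) h <;> simp only [Sum.elim_inl, Sum.elim_inr, hpair] at h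
    · obtain ⟨h1, h2⟩ := Prod.ext_iff.mp h
      exact congrArg Sum.inl (Prod.ext ((S.restCouple hs).injective (Subtype.ext h1)) h2)
    · have hseat := (congrArg Prod.fst h).trans (S.fst_cyc hm i' j')
      exact ((S.restCouple hs a.1).2 ⟨_, hseat.symm⟩).elim
    · have hseat := (congrArg Prod.fst h).symm.trans (S.fst_cyc hm i j)
      exact ((S.restCouple hs a'.1).2 ⟨_, hseat.symm⟩).elim
    · exact congrArg Sum.inr (S.cyc_injective hm h)
  · simp only [Fintype.card_sum, Fintype.card_prod, Fintype.card_fin, Fintype.card_sigma,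
      ZMod.card, ← Finset.mul_sum]
    omega

noncomputable def toFactor : HOPFactor n s t m where
  pair a := (S.restCouple hs a, 0)
  cyc := S.cyc hm
  alt_even := S.cyc_add_one_of_even hm
  alt_odd i j hj := by
    rw [S.cyc_edge_of_odd hm i j hj]
    exact S.not_isIEdge_seatEdge hm _
  spanning := S.spanning_bijective hm hs

lemma mem_toFactor_edges_iff {e : Sym2 (HOPVertex n)} (he : ¬ IsIEdge e) :
    e ∈ (S.toFactor hm hs).edges ↔ ∃ p, S.seatEdge p = e := by
  constructor
  · rintro (⟨a, rfl⟩ | ⟨i, j, rfl⟩)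
    · exact absurd ⟨_, rfl⟩ he
    · rcases Nat.mod_two_eq_zero_or_one j.val with hj | hj
      · refine absurd ⟨(S.toFactor hm hs).cyc i j, ?_⟩ he
        exact congrArg _ (S.cyc_add_one_of_even hm i j hj)
      · exact ⟨_, (S.cyc_edge_of_odd hm i j hj).symm⟩
  · rintro ⟨⟨i, a⟩, rfl⟩
    obtain ⟨j, hj, rfl⟩ := exists_odd_cycSeat_eq hm i a
    exact Or.inr ⟨i, j, (S.cyc_edge_of_odd hm i j hj).symm⟩

end HOPSeating

lemma card_isIEdge (n : ℕ) : Nat.card {e : Sym2 (HOPVertex n) // IsIEdge e} = n := by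
  have hinj : Injective fun i : Fin n => s(((i, 0) : HOPVertex n), (i, 1)) := by
    intro i i' h
    rcases Sym2.eq_iff.mp h with ⟨h1, -⟩ | ⟨h1, -⟩
    · exact congrArg Prod.fst h1
    · exact absurd (congrArg Prod.snd h1) zero_ne_one
  have hrange :
      Set.range (fun i : Fin n => s(((i, 0) : HOPVertex n), (i, 1))) = {e | IsIEdge e} := by
    ext e
    constructor
    · rintro ⟨i, rfl⟩
      exact ⟨(i, 0), rfl⟩
    · rintro ⟨⟨i, p⟩, rfl⟩
      fin_cases p
      · exact ⟨i, rfl⟩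
      · exact ⟨i, Sym2.eq_swap⟩
  have := Nat.card_range_of_injective hinj
  rwa [hrange, Nat.card_fin] at this

lemma card_nonIEdges (n : ℕ) :
    Nat.card {e : Sym2 (HOPVertex n) // ¬ e.IsDiag ∧ ¬ IsIEdge e} = 2 * n * (n - 1) := by
  classical
  have hdiag : Nat.card {e : Sym2 (HOPVertex n) // ¬ e.IsDiag} = n * (2 * n - 1) := by
    rw [Nat.card_eq_fintype_card, Sym2.card_subtype_not_diag, Fintype.card_prod, Fintype.card_fin,
      Fintype.card_fin, Nat.choose_two_right, mul_comm n 2, mul_assoc,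
      Nat.mul_div_cancel_left _ two_pos]
  have hsplit : Nat.card {e : Sym2 (HOPVertex n) // ¬ e.IsDiag} =
      Nat.card {e : Sym2 (HOPVertex n) // IsIEdge e} +
        Nat.card {e : Sym2 (HOPVertex n) // ¬ e.IsDiag ∧ ¬ IsIEdge e} := by
    rw [← Nat.card_sum]
    refine Nat.card_congr ((Equiv.sumCompl fun x : {e : Sym2 (HOPVertex n) // ¬ e.IsDiag} =>
      IsIEdge x.1).symm.trans (Equiv.sumCongr ?_ (Equiv.subtypeSubtypeEquivSubtypeInter
        (fun e : Sym2 (HOPVertex n) => ¬ e.IsDiag) fun e => ¬ IsIEdge e)))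
    exact (Equiv.subtypeSubtypeEquivSubtypeInter
      (fun e : Sym2 (HOPVertex n) => ¬ e.IsDiag) IsIEdge).trans
      (Equiv.subtypeEquivRight fun e => show ¬ e.IsDiag ∧ IsIEdge e ↔ IsIEdge e from
        ⟨And.right, fun h => ⟨not_isDiag_of_isIEdge h, h⟩⟩)
  rw [card_isIEdge, hdiag] at hsplit
  rcases n with _ | n
  · simp
  · have : (n + 1) * (2 * (n + 1) - 1) = (n + 1) + 2 * (n + 1) * n := by
      rw [show 2 * (n + 1) - 1 = 2 * n + 1 by omega]
      ring
    rw [Nat.add_sub_cancel]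
    omega

theorem HOPSolution.of_seatings {n s t : ℕ} {m : Fin t → ℕ} {ι : Type*} [Fintype ι]
    (S : ι → HOPSeating n t m) (hm : ∀ i, 2 ≤ m i) (hs : s + ∑ i, m i = n)
    (hcard : Fintype.card ι * ∑ i, m i = 2 * n * (n - 1))
    (hcover : ∀ e, ¬ e.IsDiag → ¬ IsIEdge e → ∃ x p, (S x).seatEdge p = e) :
    HOPSolution n s t m := by
  let Φ (xp : ι × Σ i, Fin (m i)) : {e : Sym2 (HOPVertex n) // ¬ e.IsDiag ∧ ¬ IsIEdge e} :=
    ⟨(S xp.1).seatEdge xp.2, (S xp.1).seatEdge_not_isDiag hm xp.2,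
      (S xp.1).not_isIEdge_seatEdge hm xp.2⟩
  have hΦ : Injective Φ := by
    refine ((Nat.bijective_iff_surjective_and_card Φ).mpr ⟨?_, ?_⟩).injective
    · rintro ⟨e, hd, hI⟩
      obtain ⟨x, p, rfl⟩ := hcover e hd hI
      exact ⟨(x, p), rfl⟩
    · rw [card_nonIEdges, Nat.card_eq_fintype_card, Fintype.card_prod, Fintype.card_sigma,
        ← hcard]
      simp
  let E := Fintype.equivFin ι
  refine ⟨Fintype.card ι, hcard, fun k => (S (E.symm k)).toFactor hm hs, fun e hd hI => ?_⟩
  obtain ⟨x, p, rfl⟩ := hcover e hd hI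
  refine ⟨E x, ?_, fun k hk => ?_⟩
  · show _ ∈ ((S (E.symm (E x))).toFactor hm hs).edges
    rw [HOPSeating.mem_toFactor_edges_iff _ hm hs hI, E.symm_apply_apply]
    exact ⟨p, rfl⟩
  · obtain ⟨p', hp'⟩ := ((S _).mem_toFactor_edges_iff hm hs hI).mp hk
    have := congrArg Prod.fst (hΦ (Subtype.ext hp' : Φ (E.symm k, p') = Φ (x, p)))
    simpa using congrArg E this

lemma ZMod.natCast_ne_natCast_of_lt {N a b : ℕ} (ha : a < 2 * N) (hb : b < 2 * N)
    (h : a ≠ b ∧ a ≠ b + N ∧ b ≠ a + N) : (a : ZMod N) ≠ b := by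
  wlog hab : a ≤ b generalizing a b
  · exact (this hb ha ⟨h.1.symm, h.2.2, h.2.1⟩ (by omega)).symm
  intro heq
  obtain ⟨c, hc⟩ := (Nat.modEq_iff_dvd' hab).mp ((ZMod.natCast_eq_natCast_iff a b N).mp heq)
  have hc2 : c < 2 := by
    by_contra hc2
    have : N * 2 ≤ N * c := Nat.mul_le_mul_left N (by omega)
    omega
  interval_cases c <;> omega

lemma ZMod.exists_natCast_add_three_mul_eq {N : ℕ} [NeZero N] (hN : 3 ∣ N) (P : ZMod N) (X : ℕ)
    (h : P.val % 3 = X % 3) : ∃ j < N / 3, ((X + 3 * j : ℕ) : ZMod N) = P := by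
  have hX : (X % N) % 3 = X % 3 := Nat.mod_mod_of_dvd X hN
  have hXlt : X % N < N := Nat.mod_lt X (NeZero.pos N)
  have hP := P.val_lt
  have hmod (j : ℕ) : ((X + 3 * j : ℕ) : ZMod N) = ((X % N + 3 * j : ℕ) : ZMod N) := by
    push_cast
    rw [ZMod.natCast_mod]
  rcases le_or_gt (X % N) P.val with hle | hlt
  · refine ⟨(P.val - X % N) / 3, by omega, ?_⟩
    rw [hmod, show X % N + 3 * ((P.val - X % N) / 3) = P.val by omega, ZMod.natCast_zmod_val]
  · refine ⟨(P.val + N - X % N) / 3, by omega, ?_⟩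
    rw [hmod, show X % N + 3 * ((P.val + N - X % N) / 3) = P.val + N by omega, Nat.cast_add,
      ZMod.natCast_self, add_zero, ZMod.natCast_zmod_val]

namespace HOPNineModTwelve

open HOPSeating

abbrev Seat : Type := Σ i : Fin 2, Fin (![2, 4] i)

def seat4 (a : Fin 2) : Seat := ⟨0, a⟩

def seat8 (a : Fin 4) : Seat := ⟨1, a⟩

/-- Couples are natural numbers, read modulo `12k + 9`. -/
def twoTables (c4 : Fin 2 → ℕ × Fin 2) (c8 : Fin 4 → ℕ × Fin 2) : Seat → ℕ × Fin 2
  | ⟨0, a⟩ => c4 a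
  | ⟨1, a⟩ => c8 a

lemma twoTables_seat4 (c4 : Fin 2 → ℕ × Fin 2) (c8 : Fin 4 → ℕ × Fin 2) (a : Fin 2) :
    twoTables c4 c8 (seat4 a) = c4 a :=
  rfl

lemma twoTables_seat8 (c4 : Fin 2 → ℕ × Fin 2) (c8 : Fin 4 → ℕ × Fin 2) (a : Fin 4) :
    twoTables c4 c8 (seat8 a) = c8 a :=
  rfl

lemma next_seat4 (a : Fin 2) : next (seat4 a) = seat4 (a + 1) := by
  fin_cases a <;> rfl

lemma next_seat8 (a : Fin 4) : next (seat8 a) = seat8 (a + 1) := by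
  fin_cases a <;> rfl

/-- The seat edges have differences `3b, 3b` at the short table, and `3b - 1, 3b + 1, 3b - 1,
3b + 1` (for `r = 0, 1`) or `3b - 2, 3b - 1, 3b - 2, 3b - 1` (for `r = 2`) at the long one. -/
def longBlock (b : ℕ) (r : Fin 3) (t : Fin 2) : Seat → ℕ × Fin 2 :=
  twoTables ![(r, 0), (3 * b + r, t)]
    (![![(4, t + 1), (3 * b + 3, t), (6 * b + 4, t), (3 * b + 5, t)],
       ![(5, t + 1), (3 * b + 4, t), (6 * b + 5, t), (3 * b + 6, t)],
       ![(6, t + 1), (3 * b + 4, t), (6 * b + 3, t), (3 * b + 5, t)]] r)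

/-- The seat edges have differences `1, 1` at the short table and `1, 6k + 4, 1, 6k + 4` at the
long one. -/
def shortBlock (k : ℕ) (t : Fin 2) : Seat → ℕ × Fin 2 :=
  twoTables ![(1, 0), (2, t)]
    ![(12 * k + 8, t + 1), (12 * k + 9, t), (18 * k + 13, t + 1), (18 * k + 12, t + 1)]

abbrev BaseIdx (k : ℕ) : Type := Fin (2 * k + 1) × Fin 3 × Fin 2 ⊕ Fin 2

def base {k : ℕ} : BaseIdx k → Seat → ℕ × Fin 2
  | .inl (b, r, t) => longBlock (b + 1) r t
  | .inr t => shortBlock k t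

lemma base_injective {k : ℕ} (f : BaseIdx k) :
    Injective fun p => ((base f p).1 : ZMod (12 * k + 9)) := by
  intro p q h
  rcases f with ⟨⟨b, hb⟩, r, t⟩ | t
  on_goal 1 => fin_cases r
  all_goals
    fin_cases p <;> fin_cases q <;> first
    | rfl
    | refine absurd h (ZMod.natCast_ne_natCast_of_lt ?_ ?_ ?_) <;>
        simp [base, longBlock, shortBlock, twoTables] <;> omega

def toFin {k : ℕ} : ZMod (12 * k + 9) ≃ Fin (12 * k + 9) := (ZMod.finEquiv _).symm.toEquiv

def seating {k : ℕ} (ι : BaseIdx k × Fin (4 * k + 3)) : HOPSeating (12 * k + 9) 2 ![2, 4] where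
  seat p := (toFin (((base ι.1 p).1 + 3 * ι.2 : ℕ) : ZMod (12 * k + 9)), (base ι.1 p).2)
  couple_injective p q h := by
    refine base_injective ι.1 (add_right_cancel (b := ((3 * ι.2 : ℕ) : ZMod (12 * k + 9))) ?_)
    simpa using toFin.injective h

def baseEdge (β : Seat → ℕ × Fin 2) (p : Seat) : Sym2 (ℕ × Fin 2) :=
  s(((β p).1, (β p).2 + 1), β (next p))

lemma seatEdge_seating {k : ℕ} (ι : BaseIdx k × Fin (4 * k + 3)) (p : Seat) :
    (seating ι).seatEdge p = (baseEdge (base ι.1) p).map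
      fun v => (toFin ((v.1 + 3 * ι.2 : ℕ) : ZMod (12 * k + 9)), v.2) :=
  rfl

def IsSeatEdge {k : ℕ} (P : ZMod (12 * k + 9)) (d : ℕ) (u v : Fin 2) : Prop :=
  ∃ ι p, (seating ι).seatEdge p = s((toFin P, u), (toFin (P + d), v))

variable {k : ℕ} {P : ZMod (12 * k + 9)} {d : ℕ} {u v : Fin 2}

lemma isSeatEdge_of_baseEdge {X Y : ℕ} {a b : Fin 2} (f : BaseIdx k) (p : Seat)
    (hf : baseEdge (base f) p = s((X, a), (Y, b)))
    (h : P.val % 3 = X % 3 ∧ Y = X + d ∧ a = u ∧ b = v := by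
      simp [base, longBlock, shortBlock, twoTables_seat4, twoTables_seat8, next_seat4,
        next_seat8] <;> omega) :
    IsSeatEdge P d u v := by
  obtain ⟨hX, hY, rfl, rfl⟩ := h
  obtain ⟨j, hj, hXj⟩ := ZMod.exists_natCast_add_three_mul_eq ⟨4 * k + 3, by ring⟩ P X hX
  refine ⟨(f, ⟨j, by omega⟩), p, ?_⟩
  rw [seatEdge_seating, hf, Sym2.map_mk, ← hXj, hY]
  push_cast
  ring_nf

lemma isSeatEdge_of_mod_three_eq_zero (h1 : 1 ≤ d) (h2 : d ≤ 6 * k + 4) (h0 : d % 3 = 0) :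
    IsSeatEdge P d u v := by
  have hr : P.val % 3 < 3 := Nat.mod_lt _ three_pos
  have hb : d / 3 - 1 < 2 * k + 1 := by omega
  fin_cases u
  · exact isSeatEdge_of_baseEdge (.inl (⟨d / 3 - 1, hb⟩, ⟨P.val % 3, hr⟩, v + 1)) (seat4 1)
      Sym2.eq_swap
  · exact isSeatEdge_of_baseEdge (.inl (⟨d / 3 - 1, hb⟩, ⟨P.val % 3, hr⟩, v)) (seat4 0) rfl

lemma isSeatEdge_of_mod_three_eq_two (h2 : d ≤ 6 * k + 4) (h0 : d % 3 = 2) :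
    IsSeatEdge P d u v := by
  have hb : d / 3 < 2 * k + 1 := by omega
  have hρ : P.val % 3 = 0 ∨ P.val % 3 = 1 ∨ P.val % 3 = 2 := by omega
  obtain rfl | rfl : u = v ∨ v = u + 1 := by omega
  all_goals rcases hρ with hρ | hρ | hρ
  · exact isSeatEdge_of_baseEdge (.inl (⟨d / 3, hb⟩, 2, u + 1)) (seat8 3) Sym2.eq_swap
  · exact isSeatEdge_of_baseEdge (.inl (⟨d / 3, hb⟩, 0, u)) (seat8 0) rfl
  · exact isSeatEdge_of_baseEdge (.inl (⟨d / 3, hb⟩, 1, u)) (seat8 0) rfl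
  · exact isSeatEdge_of_baseEdge (.inl (⟨d / 3, hb⟩, 1, u)) (seat8 2) Sym2.eq_swap
  · exact isSeatEdge_of_baseEdge (.inl (⟨d / 3, hb⟩, 2, u + 1)) (seat8 1) rfl
  · exact isSeatEdge_of_baseEdge (.inl (⟨d / 3, hb⟩, 0, u)) (seat8 2) Sym2.eq_swap

lemma isSeatEdge_of_mod_three_eq_one (h1 : 4 ≤ d) (h2 : d ≤ 6 * k + 1) (h0 : d % 3 = 1) :
    IsSeatEdge P d u v := by
  have hb : d / 3 < 2 * k + 1 := by omega
  have hb' : d / 3 - 1 < 2 * k + 1 := by omega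
  have hρ : P.val % 3 = 0 ∨ P.val % 3 = 1 ∨ P.val % 3 = 2 := by omega
  obtain rfl | rfl : u = v ∨ v = u + 1 := by omega
  all_goals rcases hρ with hρ | hρ | hρ
  · exact isSeatEdge_of_baseEdge (.inl (⟨d / 3, hb⟩, 2, u)) (seat8 0) rfl
  · exact isSeatEdge_of_baseEdge (.inl (⟨d / 3 - 1, hb'⟩, 0, u + 1)) (seat8 3) Sym2.eq_swap
  · exact isSeatEdge_of_baseEdge (.inl (⟨d / 3 - 1, hb'⟩, 1, u + 1)) (seat8 3) Sym2.eq_swap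
  · exact isSeatEdge_of_baseEdge (.inl (⟨d / 3 - 1, hb'⟩, 0, u + 1)) (seat8 1) rfl
  · exact isSeatEdge_of_baseEdge (.inl (⟨d / 3 - 1, hb'⟩, 1, u + 1)) (seat8 1) rfl
  · exact isSeatEdge_of_baseEdge (.inl (⟨d / 3, hb⟩, 2, u)) (seat8 2) Sym2.eq_swap

lemma isSeatEdge_one : IsSeatEdge P 1 u v := by
  have hb : 0 < 2 * k + 1 := by omega
  have hρ : P.val % 3 = 0 ∨ P.val % 3 = 1 ∨ P.val % 3 = 2 := by omega
  rcases hρ with hρ | hρ | hρ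
  · obtain rfl | rfl : u = v ∨ v = u + 1 := by omega
    · exact isSeatEdge_of_baseEdge (.inl (⟨0, hb⟩, 2, u)) (seat8 0) rfl
    · exact isSeatEdge_of_baseEdge (.inr (u + 1)) (seat8 2) Sym2.eq_swap
  · fin_cases u
    · exact isSeatEdge_of_baseEdge (.inr (v + 1)) (seat4 1) Sym2.eq_swap
    · exact isSeatEdge_of_baseEdge (.inr v) (seat4 0) rfl
  · obtain rfl | rfl : u = v ∨ v = u + 1 := by omega
    · exact isSeatEdge_of_baseEdge (.inr u) (seat8 0) rfl
    · exact isSeatEdge_of_baseEdge (.inl (⟨0, hb⟩, 2, u)) (seat8 2) Sym2.eq_swap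

lemma isSeatEdge_six_mul_add_four : IsSeatEdge P (6 * k + 4) u v := by
  have hb : 2 * k < 2 * k + 1 := by omega
  have hρ : P.val % 3 = 0 ∨ P.val % 3 = 1 ∨ P.val % 3 = 2 := by omega
  obtain rfl | rfl : u = v ∨ v = u + 1 := by omega
  all_goals rcases hρ with hρ | hρ | hρ
  · exact isSeatEdge_of_baseEdge (.inr (u + 1)) (seat8 1) rfl
  · exact isSeatEdge_of_baseEdge (.inl (⟨2 * k, hb⟩, 0, u + 1)) (seat8 3) Sym2.eq_swap
  · exact isSeatEdge_of_baseEdge (.inl (⟨2 * k, hb⟩, 1, u + 1)) (seat8 3) Sym2.eq_swap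
  · exact isSeatEdge_of_baseEdge (.inl (⟨2 * k, hb⟩, 0, u + 1)) (seat8 1) rfl
  · exact isSeatEdge_of_baseEdge (.inl (⟨2 * k, hb⟩, 1, u + 1)) (seat8 1) rfl
  · exact isSeatEdge_of_baseEdge (.inr (u + 1)) (seat8 3) Sym2.eq_swap

lemma isSeatEdge_of_le (h1 : 1 ≤ d) (h2 : d ≤ 6 * k + 4) : IsSeatEdge P d u v := by
  obtain h0 | h0 | rfl | rfl | ⟨h0, h4, h5⟩ : d % 3 = 0 ∨ d % 3 = 2 ∨ d = 1 ∨ d = 6 * k + 4 ∨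
      d % 3 = 1 ∧ 4 ≤ d ∧ d ≤ 6 * k + 1 := by omega
  · exact isSeatEdge_of_mod_three_eq_zero h1 h2 h0
  · exact isSeatEdge_of_mod_three_eq_two h2 h0
  · exact isSeatEdge_one
  · exact isSeatEdge_six_mul_add_four
  · exact isSeatEdge_of_mod_three_eq_one h4 h5 h0

lemma exists_seatEdge_eq (e : Sym2 (HOPVertex (12 * k + 9))) (hd : ¬ e.IsDiag)
    (hI : ¬ IsIEdge e) : ∃ ι p, (seating ι).seatEdge p = e := by
  induction e using Sym2.inductionOn with
  | hf x y =>
  obtain ⟨P₀, u⟩ := x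
  obtain ⟨Q₀, v⟩ := y
  obtain ⟨P, rfl⟩ := toFin.surjective P₀
  obtain ⟨Q, rfl⟩ := toFin.surjective Q₀
  have hPQ : P ≠ Q := by
    rintro rfl
    obtain rfl | rfl : u = v ∨ v = u + 1 := by omega
    · exact hd (Sym2.mk_isDiag_iff.mpr rfl)
    · exact hI ⟨_, rfl⟩
  have hlt := (Q - P).val_lt
  have hpos : (Q - P).val ≠ 0 := by
    rw [Ne, ZMod.val_eq_zero, sub_eq_zero]
    exact hPQ.symm
  by_cases hsmall : (Q - P).val ≤ 6 * k + 4
  · obtain ⟨ι, p, h⟩ := isSeatEdge_of_le (P := P) (u := u) (v := v) (by omega) hsmall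
    refine ⟨ι, p, h.trans ?_⟩
    rw [ZMod.natCast_zmod_val, add_sub_cancel]
  · obtain ⟨ι, p, h⟩ := isSeatEdge_of_le (P := Q) (u := v) (v := u)
      (d := 12 * k + 9 - (Q - P).val) (by omega) (by omega)
    refine ⟨ι, p, h.trans (Sym2.eq_swap.trans ?_)⟩
    rw [Nat.cast_sub hlt.le, ZMod.natCast_self, ZMod.natCast_zmod_val]
    ring_nf

lemma card_index_mul_sum : Fintype.card (BaseIdx k × Fin (4 * k + 3)) * ∑ i, ![2, 4] i =
    2 * (12 * k + 9) * (12 * k + 9 - 1) := by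
  simp only [Fintype.card_prod, Fintype.card_sum, Fintype.card_fin, Fin.sum_univ_two]
  rw [show 12 * k + 9 - 1 = 12 * k + 8 by omega]
  simp
  ring

end HOPNineModTwelve

/-- Lemma 6.2: for `k ≥ 0`, `n = 12k + 9` and `s = n - 6`,
`HOP(2^⟨s⟩, 4, 8)` has a solution. -/
theorem hop_C2_C4 (k n s : ℕ) (hn : n = 12 * k + 9) (hs : s = n - 6) :
    HOPSolution n s 2 ![2, 4] := by
  subst hn hs
  exact HOPSolution.of_seatings HOPNineModTwelve.seating (by decide) (by simp)
    HOPNineModTwelve.card_index_mul_sum HOPNineModTwelve.exists_seatEdge_eq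
end
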